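/- arXiv:2504.19389 — 5 statements merged into one kernel-verified Lean document; each statement's English description precedes it below -/
import Mathlib

section
/- The function distrib : Dtry≠∅ (Option a) → Option (Dtry≠∅ a), which recursively filters out None leaves (returning None if everything is filtered) is a distributive law of the free monad Dtry≠∅ over the Option monad: it is natural in a and satisfies the four distributive-law axioms (compatibility with the units and multiplications of both monads). -/
/- Nonempty finite maps from strings to `b` are modeled as a nonempty finite key set
`s : Finset String` together with a value function `(k : String) → k ∈ s → b`. -/

/-- `DtryNE a = Free Record≠∅ a`: the free monad on nonempty finite string maps. -/
inductive DtryNE (a : Type) : Type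
  | pure : a → DtryNE a
  | join : (s : Finset String) → s.Nonempty → ((k : String) → k ∈ s → DtryNE a) → DtryNE a

namespace DtryNE

variable {a b : Type}

/-- Functorial action. -/
def map (g : a → b) : DtryNE a → DtryNE b
  | .pure x => .pure (g x)
  | .join s hs f => .join s hs fun k h => (f k h).map g

/-- Monad multiplication of the free monad. -/
def mu : DtryNE (DtryNE a) → DtryNE a
  | .pure x => x
  | .join s hs f => .join s hs fun k h => (f k h).mu

attribute [local instance] Classical.propDecidable

/-- `distrib`: recursively filter out `none` leaves, returning `none` if everything
is filtered away.  At a node, `filterNothings` keeps exactly the keys whose subtree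
survives, and fails if no key survives. -/
noncomputable def distrib : DtryNE (Option a) → Option (DtryNE a)
  | .pure mx => mx.map .pure
  | .join s _ f =>
      let g : (k : String) → k ∈ s → Option (DtryNE a) := fun k h => distrib (f k h)
      let s' : Finset String := s.filter (fun k => ∃ h : k ∈ s, (g k h).isSome)
      if h' : s'.Nonempty then
        some (.join s' h' (fun k hk => (g k (by
            have := (Finset.mem_filter.mp hk).1; exact this)).get (by
            have := (Finset.mem_filter.mp hk).2; exact this.choose_spec)))
      else none

end DtryNE

/-!
At a node, `distrib` applies `distrib` to every child and joins the children that survive.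
This step `filterJoin` only depends on the children as a partial function of the keys, and it
commutes with `Option.bind ψ` for every `ψ` that is itself computed node-wise by `filterJoin`.
Taking `ψ = distrib` gives compatibility with `Option.join`, and taking `ψ = some ∘ φ` for a
node-wise `φ` gives naturality (`φ = map f`) and compatibility with `mu`; the unit laws hold
because `filterJoin` keeps every key of a record without `none` entries.
-/

namespace DtryNE

variable {α β : Type}

attribute [local instance] Classical.propDecidable

theorem join_congr {s₁ s₂ : Finset String} (hs : s₁ = s₂) {h₁ : s₁.Nonempty} {h₂ : s₂.Nonempty}
    {f₁ : (k : String) → k ∈ s₁ → DtryNE α} {f₂ : (k : String) → k ∈ s₂ → DtryNE α}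
    (hf : ∀ k (hk₁ : k ∈ s₁) (hk₂ : k ∈ s₂), f₁ k hk₁ = f₂ k hk₂) :
    join s₁ h₁ f₁ = join s₂ h₂ f₂ := by
  subst hs
  obtain rfl : f₁ = f₂ := funext₂ fun k hk => hf k hk hk
  rfl

def extendByNone {γ : Type} (s : Finset String) (g : (k : String) → k ∈ s → Option γ)
    (k : String) : Option γ :=
  if h : k ∈ s then g k h else none

section filterJoin

variable {s : Finset String} {g : (k : String) → k ∈ s → Option (DtryNE α)} {k : String}

variable (s g) in
def survivors : Finset String :=
  s.filter fun k => ∃ h : k ∈ s, (g k h).isSome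

theorem mem_survivors : k ∈ survivors s g ↔ (extendByNone s g k).isSome := by
  unfold survivors extendByNone
  split_ifs with hk <;> simp [hk]

theorem mem_of_mem_survivors (hk : k ∈ survivors s g) : k ∈ s :=
  (Finset.mem_filter.mp hk).1

theorem isSome_of_mem_survivors (hk : k ∈ survivors s g) :
    (g k (mem_of_mem_survivors hk)).isSome :=
  (Finset.mem_filter.mp hk).2.choose_spec

variable (s g) in
/-- `Option.map join ∘ filterNothings` on a record with key set `s`. -/
noncomputable def filterJoin : Option (DtryNE α) :=
  if h : (survivors s g).Nonempty then
    some (.join _ h fun k hk => (g k (mem_of_mem_survivors hk)).get (isSome_of_mem_survivors hk))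
  else none

theorem filterJoin_of_nonempty (h : (survivors s g).Nonempty) :
    filterJoin s g = some (.join _ h fun k hk =>
      (g k (mem_of_mem_survivors hk)).get (isSome_of_mem_survivors hk)) :=
  dif_pos h

theorem filterJoin_of_not_nonempty (h : ¬(survivors s g).Nonempty) : filterJoin s g = none :=
  dif_neg h

theorem filterJoin_eq_none_iff : filterJoin s g = none ↔ ∀ k (hk : k ∈ s), g k hk = none := by
  unfold filterJoin
  split_ifs with hne
  · obtain ⟨k, hk⟩ := hne
    simpa using
      ⟨k, mem_of_mem_survivors hk, Option.isSome_iff_ne_none.mp (isSome_of_mem_survivors hk)⟩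
  · simpa [survivors, Finset.not_nonempty_iff_eq_empty, Finset.filter_eq_empty_iff] using hne

end filterJoin

theorem distrib_join (s : Finset String) (hs : s.Nonempty)
    (f : (k : String) → k ∈ s → DtryNE (Option α)) :
    distrib (.join s hs f) = filterJoin s fun k h => distrib (f k h) := rfl

theorem filterJoin_congr {s₁ s₂ : Finset String}
    {g₁ : (k : String) → k ∈ s₁ → Option (DtryNE α)}
    {g₂ : (k : String) → k ∈ s₂ → Option (DtryNE α)}
    (h : extendByNone s₁ g₁ = extendByNone s₂ g₂) :
    filterJoin s₁ g₁ = filterJoin s₂ g₂ := by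
  have hkeys : survivors s₁ g₁ = survivors s₂ g₂ := by
    ext k
    rw [mem_survivors, mem_survivors, h]
  have hval : ∀ k (hk₁ : k ∈ s₁) (hk₂ : k ∈ s₂), g₁ k hk₁ = g₂ k hk₂ := fun k hk₁ hk₂ => by
    simpa [extendByNone, hk₁, hk₂] using congrFun h k
  by_cases hne : (survivors s₁ g₁).Nonempty
  · rw [filterJoin_of_nonempty hne, filterJoin_of_nonempty (hkeys ▸ hne)]
    exact congrArg some (join_congr hkeys fun k hk₁ hk₂ =>
      Option.get_inj.mpr (hval k (mem_of_mem_survivors hk₁) (mem_of_mem_survivors hk₂)))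
  · rw [filterJoin_of_not_nonempty hne, filterJoin_of_not_nonempty (hkeys ▸ hne)]

theorem filterJoin_some {s : Finset String} (hs : s.Nonempty)
    (f : (k : String) → k ∈ s → DtryNE α) :
    filterJoin s (fun k h => some (f k h)) = some (join s hs f) := by
  have hkeys : survivors s (fun k h => some (f k h)) = s :=
    Finset.filter_true_of_mem fun k hk => ⟨hk, rfl⟩
  rw [filterJoin_of_nonempty (hkeys.symm ▸ hs)]
  exact congrArg some (join_congr hkeys fun _ _ _ => rfl)

theorem filterJoin_bind (ψ : DtryNE α → Option (DtryNE β))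
    (hψ : ∀ t ht u, ψ (.join t ht u) = filterJoin t fun k h => ψ (u k h))
    (s : Finset String) (g : (k : String) → k ∈ s → Option (DtryNE α)) :
    filterJoin s (fun k h => (g k h).bind ψ) = (filterJoin s g).bind ψ := by
  by_cases hnone : filterJoin s g = none
  · rw [hnone, Option.bind_none, filterJoin_eq_none_iff]
    intro k hk
    rw [filterJoin_eq_none_iff.mp hnone k hk, Option.bind_none]
  have hne : (survivors s g).Nonempty := by
    by_contra hne
    exact hnone (filterJoin_of_not_nonempty hne)
  rw [filterJoin_of_nonempty hne, Option.bind_some, hψ]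
  apply filterJoin_congr
  funext k
  unfold extendByNone
  split_ifs with hk hsurv hsurv <;> beta_reduce
  · conv_lhs => rw [← Option.some_get (isSome_of_mem_survivors hsurv), Option.bind_some]
  · have hnone : g k hk = none := by simpa [mem_survivors, extendByNone, hk] using hsurv
    simp only [hnone, Option.bind_none]
  · exact absurd (mem_of_mem_survivors hsurv) hk
  · rfl

theorem filterJoin_map (φ : DtryNE α → DtryNE β)
    (hφ : ∀ t ht u, φ (.join t ht u) = .join t ht fun k h => φ (u k h))
    (s : Finset String) (g : (k : String) → k ∈ s → Option (DtryNE α)) :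
    filterJoin s (fun k h => (g k h).map φ) = (filterJoin s g).map φ := by
  simp only [Option.map_eq_bind]
  refine filterJoin_bind (some ∘ φ) (fun t ht u => ?_) s g
  rw [Function.comp_apply, hφ]
  exact (filterJoin_some ht _).symm

theorem distrib_map (f : α → β) (t : DtryNE (Option α)) :
    distrib (t.map (Option.map f)) = (distrib t).map (map f) := by
  induction t with
  | pure mx => cases mx <;> rfl
  | join s hs u ih =>
    rw [map, distrib_join, distrib_join]
    simp only [ih]
    exact filterJoin_map (map f) (fun _ _ _ => rfl) s _

theorem distrib_map_some (t : DtryNE α) : distrib (t.map some) = some t := by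
  induction t with
  | pure x => rfl
  | join s hs u ih =>
    rw [map, distrib_join]
    simp only [ih]
    exact filterJoin_some hs u

theorem distrib_mu (t : DtryNE (DtryNE (Option α))) :
    distrib t.mu = (distrib (t.map distrib)).map mu := by
  induction t with
  | pure u =>
    show distrib u = ((distrib u).map pure).map mu
    rw [Option.map_map]
    exact Option.map_id'.symm
  | join s hs u ih =>
    rw [mu, map, distrib_join, distrib_join]
    simp only [ih]
    exact filterJoin_map mu (fun _ _ _ => rfl) s _

theorem distrib_map_join (t : DtryNE (Option (Option α))) :
    distrib (t.map Option.join) = ((distrib t).map distrib).join := by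
  induction t with
  | pure mx => rcases mx with _ | _ | _ <;> rfl
  | join s hs u ih =>
    have hjoin : ∀ o : Option (DtryNE (Option α)), (o.map distrib).join = o.bind distrib := by
      rintro (_ | _) <;> rfl
    rw [map, distrib_join, distrib_join]
    simp only [ih, hjoin]
    exact filterJoin_bind distrib (fun _ _ _ => rfl) s _

end DtryNE

/-- `distrib : Dtry≠∅ (Option a) → Option (Dtry≠∅ a)` is a distributive law
of the free monad `Dtry≠∅` over the `Option` monad: it is natural in `a` and satisfies
the four distributive-law axioms (compatibility with the units and multiplications of
both monads). -/
theorem distrib_is_distributive_law :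
    -- naturality
    (∀ {a b : Type} (f : a → b) (t : DtryNE (Option a)),
      DtryNE.distrib (t.map (Option.map f)) = Option.map (DtryNE.map f) (t.distrib)) ∧
    -- compatibility with the unit of `Dtry≠∅`
    (∀ {a : Type} (mx : Option a),
      DtryNE.distrib (.pure mx) = Option.map DtryNE.pure mx) ∧
    -- compatibility with the unit of `Option`
    (∀ {a : Type} (t : DtryNE a),
      DtryNE.distrib (t.map some) = some t) ∧
    -- compatibility with the multiplication of `Dtry≠∅`
    (∀ {a : Type} (t : DtryNE (DtryNE (Option a))),
      DtryNE.distrib t.mu = Option.map DtryNE.mu (DtryNE.distrib (t.map DtryNE.distrib))) ∧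
    -- compatibility with the multiplication of `Option`
    (∀ {a : Type} (t : DtryNE (Option (Option a))),
      DtryNE.distrib (t.map Option.join) =
        Option.join (Option.map DtryNE.distrib t.distrib)) := by
  exact ⟨DtryNE.distrib_map, fun _ => rfl, DtryNE.distrib_map_some, DtryNE.distrib_mu,
    DtryNE.distrib_map_join⟩
end

section
/- The map pathMap, sending a directory with values in a to the finite map from its complete paths to the leaf values at those paths, is injective: two directories with the same path-to-value map are equal. -/
namespace DtryNE

variable {a b : Type}

attribute [local instance] Classical.propDecidable

end DtryNE

/-- Look up the value stored at a given path in a nonempty directory; `pathMap` viewed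
as a (finitely supported) map from complete paths to leaf values. -/
def DtryNE.look {a : Type} : DtryNE a → List String → Option a
  | .pure x, [] => some x
  | .pure _, _ :: _ => none
  | .join _ _ _, [] => none
  | .join s _ f, k :: ks => if h : k ∈ s then (f k h).look ks else none

/-- The directory monad: `Dtry = Option ∘ Dtry≠∅`. -/
def Dtry (a : Type) : Type := Option (DtryNE a)

/-- `pathMap`: the map from complete paths to the values stored at them. -/
def Dtry.pathMap {a : Type} : Dtry a → List String → Option a
  | none, _ => none
  | some t, p => t.look p

theorem DtryNE.exists_path {a : Type} (t : DtryNE a) : ∃ p x, t.look p = some x := by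
  induction t with
  | pure x => exact ⟨[], x, rfl⟩
  | join s hs f ih =>
    obtain ⟨k, hk⟩ := hs
    obtain ⟨p, x, hp⟩ := ih k hk
    exact ⟨k :: p, x, by simp [DtryNE.look, hk, hp]⟩

theorem DtryNE.look_inj {a : Type} (t u : DtryNE a) (h : t.look = u.look) : t = u := by
  induction t generalizing u with
  | pure x =>
    cases u with
    | pure y =>
      have := congrFun h []
      simp [DtryNE.look] at this
      rw [this]
    | join s hs f =>
      have := congrFun h []
      simp [DtryNE.look] at this
  | join s hs f ih =>
    cases u with
    | pure y =>
      have := congrFun h []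
      simp [DtryNE.look] at this
    | join s' hs' f' =>
      have hss : s = s' := by
        ext k
        constructor
        · intro hk
          obtain ⟨p, x, hp⟩ := DtryNE.exists_path (f k hk)
          have := congrFun h (k :: p)
          simp [DtryNE.look, hk, hp] at this
          by_contra hk'
          simp [hk'] at this
        · intro hk
          obtain ⟨p, x, hp⟩ := DtryNE.exists_path (f' k hk)
          have := congrFun h (k :: p)
          simp [DtryNE.look, hk, hp] at this
          by_contra hk'
          simp [hk'] at this
      subst hss
      have hf : f = f' := by
        funext k hk
        apply ih k hk
        funext p
        have := congrFun h (k :: p)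
        simpa [DtryNE.look, hk] using this
      subst hf
      rfl

/-- `pathMap` is injective: two directories with the same
path-to-value map are equal. -/
theorem pathMap_injective {a : Type} :
    Function.Injective (Dtry.pathMap (a := a)) := by
  intro x y h
  cases x with
  | none =>
    cases y with
    | none => rfl
    | some u =>
      obtain ⟨p, v, hp⟩ := DtryNE.exists_path u
      have := congrFun h p
      simp [Dtry.pathMap, hp] at this
  | some t =>
    cases y with
    | none =>
      obtain ⟨p, v, hp⟩ := DtryNE.exists_path t
      have := congrFun h p
      simp [Dtry.pathMap, hp] at this
    | some u =>
      have : t.look = u.look := by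
        funext p; exact congrFun h p
      rw [DtryNE.look_inj t u this]
end

section
/- A finite map m from lists of strings to values of type a lies in the image of pathMap if and only if the set of keys of m is prefix-free; consequently pathMap restricts to a bijection between Dtry a and finite maps on prefix-free key sets, with inverse fromPathMap given by successive insertion. -/
namespace DtryNE

variable {a b : Type}

attribute [local instance] Classical.propDecidable

end DtryNE

/-- A (partial) map from paths to values has prefix-free keys if no key with a value is a
prefix of a distinct key with a value. -/
def PrefixFreeKeys {a : Type} (m : List String → Option a) : Prop :=
  ∀ p p', m p ≠ none → m p' ≠ none → p ≠ p' → ¬ p <+: p'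

/-! Every subdirectory of a `DtryNE` is nonempty, so the keys of a node are exactly the first
segments of the paths through it, and a directory is recovered from its path map. Conversely,
a finite prefix-free map `m` is a leaf if it is defined at `[]`, and otherwise the node whose
children, indexed by the first segments of its keys, are built recursively from the tails
`fun p => m (k :: p)`: these are again finite and prefix-free, with shorter keys. -/

theorem setOf_ne_none_finite_iff {σ a : Type} (m : List σ → Option a) :
    {p | m p ≠ none}.Finite ↔
      {k | ∃ p, m (k :: p) ≠ none}.Finite ∧ ∀ k, {p | m (k :: p) ≠ none}.Finite := by
  refine ⟨fun hf => ⟨?_, fun k => hf.preimage List.cons_injective.injOn⟩, ?_⟩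
  · refine ((hf.image List.head?).preimage (Option.some_injective _).injOn).subset ?_
    rintro k ⟨p, hp⟩
    exact ⟨k :: p, hp, rfl⟩
  · rintro ⟨hheads, htails⟩
    refine ((Set.finite_singleton []).union
      (hheads.biUnion fun k _ => (htails k).image (k :: ·))).subset ?_
    rintro (_ | ⟨k, p⟩) hp
    · exact Or.inl rfl
    · exact Or.inr (Set.mem_biUnion ⟨p, hp⟩ ⟨p, hp, rfl⟩)

theorem prefixFreeKeys_iff {a : Type} (m : List String → Option a) :
    PrefixFreeKeys m ↔
      (m [] ≠ none → ∀ k p, m (k :: p) = none) ∧ ∀ k, PrefixFreeKeys fun p => m (k :: p) := by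
  refine ⟨fun h => ⟨fun h0 k p => ?_, fun k p p' hp hp' hne hpre => ?_⟩, ?_⟩
  · by_contra hkp
    exact h [] (k :: p) h0 hkp (List.cons_ne_nil _ _).symm List.nil_prefix
  · exact h (k :: p) (k :: p') hp hp' (by simpa using hne) (List.cons_prefix_cons.mpr ⟨rfl, hpre⟩)
  · rintro ⟨hnil, hcons⟩ (_ | ⟨k, p⟩) (_ | ⟨k', p'⟩) hp hp' hne hpre
    · exact hne rfl
    · exact hp' (hnil hp k' p')
    · exact List.cons_ne_nil _ _ (List.prefix_nil.mp hpre)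
    · obtain ⟨rfl, htail⟩ := List.cons_prefix_cons.mp hpre
      exact hcons k p p' hp hp' (by simpa using hne) htail

namespace DtryNE

variable {a : Type}

theorem exists_look_ne_none : ∀ t : DtryNE a, ∃ p, t.look p ≠ none
  | .pure _ => ⟨[], by simp [look]⟩
  | .join _ ⟨k, hk⟩ f => by
      obtain ⟨p, hp⟩ := (f k hk).exists_look_ne_none
      exact ⟨k :: p, by simpa [look, hk] using hp⟩

theorem mem_iff_exists_look_join_ne_none {s : Finset String} {hs : s.Nonempty}
    {f : (k : String) → k ∈ s → DtryNE a} {k : String} :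
    k ∈ s ↔ ∃ p, (join s hs f).look (k :: p) ≠ none := by
  refine ⟨fun hk => ?_, fun ⟨p, hp⟩ => ?_⟩
  · obtain ⟨p, hp⟩ := (f k hk).exists_look_ne_none
    exact ⟨p, by simpa [look, hk] using hp⟩
  · by_contra hk
    simp [look, hk] at hp

theorem finite_look : ∀ t : DtryNE a, {p | t.look p ≠ none}.Finite
  | .pure _ => (Set.finite_singleton []).subset fun p hp => by cases p <;> simp_all [look]
  | .join s _ f => by
      refine (setOf_ne_none_finite_iff _).mpr ⟨s.finite_toSet.subset fun k hk =>
        mem_iff_exists_look_join_ne_none.mpr hk, fun k => ?_⟩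
      by_cases hk : k ∈ s
      · simpa [look, hk] using (f k hk).finite_look
      · simp [look, hk]

theorem prefixFreeKeys_look : ∀ t : DtryNE a, PrefixFreeKeys t.look
  | .pure _ => (prefixFreeKeys_iff _).mpr ⟨fun _ _ _ => rfl, fun _ _ _ h => by simp [look] at h⟩
  | .join s _ f => (prefixFreeKeys_iff _).mpr ⟨fun h => absurd rfl h, fun k => by
      by_cases hk : k ∈ s
      · simpa [look, hk] using (f k hk).prefixFreeKeys_look
      · intro _ _ h
        simp [look, hk] at h⟩

theorem look_injective : Function.Injective (look : DtryNE a → List String → Option a) := by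
  intro t t' h
  induction t generalizing t' with
  | pure x =>
    cases t' with
    | pure y => simpa [look] using congrFun h []
    | join => simpa [look] using congrFun h []
  | join s hs f ih =>
    cases t' with
    | pure y => simpa [look] using congrFun h []
    | join s' hs' f' =>
      obtain rfl : s = s' := Finset.ext fun k => by
        rw [mem_iff_exists_look_join_ne_none (hs := hs) (f := f),
          mem_iff_exists_look_join_ne_none (hs := hs') (f := f'), h]
      obtain rfl : f = f' := funext fun k => funext fun hk =>
        ih k hk (funext fun p => by simpa [look, hk] using congrFun h (k :: p))
      rfl

theorem look_pure_eq {m : List String → Option a} {x : a} (hpf : PrefixFreeKeys m)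
    (hx : m [] = some x) : (pure x).look = m := by
  funext p
  rcases p with _ | ⟨k, p⟩
  · simp [look, hx]
  · exact (((prefixFreeKeys_iff m).mp hpf).1 (by simp [hx]) k p).symm

theorem exists_look_eq_of_tails {m : List String → Option a} (hnil : m [] = none)
    (hne : ∃ p, m p ≠ none) (hheads : {k | ∃ p, m (k :: p) ≠ none}.Finite)
    (htails : ∀ k, (∃ p, m (k :: p) ≠ none) → ∃ t : DtryNE a, t.look = fun p => m (k :: p)) :
    ∃ t : DtryNE a, t.look = m := by
  set s := hheads.toFinset
  have hs : s.Nonempty := by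
    obtain ⟨_ | ⟨k, p⟩, hp⟩ := hne
    · exact absurd hnil hp
    · exact ⟨k, hheads.mem_toFinset.mpr ⟨p, hp⟩⟩
  choose t ht using fun k (hk : k ∈ s) => htails k (hheads.mem_toFinset.mp hk)
  refine ⟨join s hs t, funext fun p => ?_⟩
  rcases p with _ | ⟨k, p⟩
  · simp [look, hnil]
  · by_cases hk : k ∈ s
    · simpa [look, hk] using congrFun (ht k hk) p
    · have hkp : m (k :: p) = none := by
        by_contra hkp
        exact hk (hheads.mem_toFinset.mpr ⟨p, hkp⟩)
      simp [look, hk, hkp]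

theorem exists_look_eq (n : ℕ) : ∀ m : List String → Option a,
    {p | m p ≠ none}.Finite → PrefixFreeKeys m → (∃ p, m p ≠ none) →
      (∀ p, m p ≠ none → p.length ≤ n) → ∃ t : DtryNE a, t.look = m := by
  induction n with
  | zero =>
    intro m _ hpf ⟨p, hp⟩ hlen
    obtain rfl : p = [] := List.eq_nil_of_length_eq_zero (Nat.le_zero.mp (hlen p hp))
    obtain ⟨x, hx⟩ := Option.ne_none_iff_exists'.mp hp
    exact ⟨pure x, look_pure_eq hpf hx⟩
  | succ n ih =>
    intro m hf hpf hne hlen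
    cases hnil : m [] with
    | some x => exact ⟨pure x, look_pure_eq hpf hnil⟩
    | none =>
      obtain ⟨hheads, htails⟩ := (setOf_ne_none_finite_iff m).mp hf
      refine exists_look_eq_of_tails hnil hne hheads fun k hk =>
        ih _ (htails k) (((prefixFreeKeys_iff m).mp hpf).2 k) hk fun p hp => ?_
      simpa using hlen (k :: p) hp

end DtryNE

namespace Dtry

variable {a : Type}

theorem pathMap_injective : Function.Injective (pathMap : Dtry a → List String → Option a)
  | none, none, _ => rfl
  | none, some t, h => t.exists_look_ne_none.elim fun p hp => absurd (congrFun h p).symm hp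
  | some t, none, h => t.exists_look_ne_none.elim fun p hp => absurd (congrFun h p) hp
  | some _, some _, h => congrArg some (DtryNE.look_injective h)

theorem finite_pathMap : ∀ d : Dtry a, {p | d.pathMap p ≠ none}.Finite
  | none => by simp [pathMap]
  | some t => t.finite_look

theorem prefixFreeKeys_pathMap : ∀ d : Dtry a, PrefixFreeKeys d.pathMap
  | none => fun _ _ h => absurd rfl h
  | some t => t.prefixFreeKeys_look

theorem exists_pathMap_eq {m : List String → Option a} (hf : {p | m p ≠ none}.Finite)
    (hpf : PrefixFreeKeys m) : ∃ d : Dtry a, d.pathMap = m := by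
  by_cases hne : ∃ p, m p ≠ none
  · obtain ⟨n, hn⟩ := (hf.image List.length).bddAbove
    obtain ⟨t, ht⟩ := DtryNE.exists_look_eq n m hf hpf hne fun p hp => hn ⟨p, hp, rfl⟩
    exact ⟨some t, ht⟩
  · simp only [ne_eq, not_exists, not_not] at hne
    exact ⟨none, funext fun p => (hne p).symm⟩

end Dtry

/-- a finitely supported map `m` from lists of strings to values of type `a`
lies in the image of `pathMap` if and only if its key set is prefix-free; consequently
`pathMap` is a bijection onto the finitely supported maps with prefix-free key sets
(the inverse being `fromPathMap`, given by successive insertion). -/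
theorem pathMap_image_prefixFree {a : Type} :
    (∀ d : Dtry a,
      (setOf fun p => d.pathMap p ≠ none).Finite ∧ PrefixFreeKeys d.pathMap) ∧
    (∀ m : List String → Option a,
      (setOf fun p => m p ≠ none).Finite → PrefixFreeKeys m →
        ∃! d : Dtry a, d.pathMap = m) :=
  ⟨fun d => ⟨d.finite_pathMap, d.prefixFreeKeys_pathMap⟩, fun _ hf hpf =>
    existsUnique_of_exists_of_unique (Dtry.exists_pathMap_eq hf hpf) fun _ _ hd hd' =>
      Dtry.pathMap_injective (hd.trans hd'.symm)⟩
end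

section
/- Given a functor T with a free monad m_T (left adjoint to the forgetful functor from T-functor-algebras to C, composed back with the forgetful functor), every monad algebra structure a : m_T X → X induces a functor algebra structure T X → X via T η_X followed by the structure map of the free algebra on X followed by a; and conversely every functor algebra b : T Y → Y induces a monad algebra m_T Y → Y; these two constructions are mutually inverse, giving an isomorphism between the category of T-functor-algebras and the Eilenberg–Moore category of m_T. -/
/-!
A monad algebra `a : m_T X ⟶ X` restricts along the natural map `T η ≫ str : T ⟶ m_T` to a
functor algebra, and the comparison functor sends a functor algebra `B` to `ε_B`. Starting from
`B`, one gets back `B.str` because `ε_B` is an algebra map and `η ≫ ε_B = 𝟙` (triangle identity).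
Starting from `a`, naturality of `η` and associativity of `a` make `a` an algebra map from the
free algebra on `X`; its transpose `η ≫ a` is `𝟙` by the unit law, so `a` is the counit.
-/

open CategoryTheory

universe v u

theorem CategoryTheory.Functor.ext_of_comp_faithful {D E B : Type*} [Category D] [Category E]
    [Category B] (U : E ⥤ B) [U.Faithful] {F G : D ⥤ E} (hobj : ∀ X, F.obj X = G.obj X)
    (hU : F ⋙ U = G ⋙ U) : F = G :=
  Functor.ext hobj fun _ _ f => U.map_injective <| by
    simpa [eqToHom_map] using Functor.congr_hom hU f

namespace CategoryTheory.Endofunctor.Algebra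

variable {C : Type u} [Category.{v} C] {T : C ⥤ C} {Free : C ⥤ Algebra T}
  (adj : Free ⊣ forget T)

theorem unit_comp_free_str_comp_counit (B : Algebra T) :
    T.map (adj.unit.app B.a) ≫ (Free.obj B.a).str ≫ (adj.counit.app B).f = B.str := by
  have hom : T.map (adj.counit.app B).f ≫ B.str = (Free.obj B.a).str ≫ (adj.counit.app B).f :=
    (adj.counit.app B).h
  have triangle : adj.unit.app B.a ≫ (adj.counit.app B).f = 𝟙 B.a :=
    adj.right_triangle_components B
  erw [← hom, ← T.map_comp_assoc, triangle, T.map_id, Category.id_comp]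

def ofMonadAlgebra (A : adj.toMonad.Algebra) : Algebra T where
  a := A.A
  str := T.map (adj.unit.app A.A) ≫ (Free.obj A.A).str ≫ A.a

theorem ofMonadAlgebra_comparison_obj (B : Algebra T) :
    ofMonadAlgebra adj ((Monad.comparison adj).obj B) = B :=
  congrArg (mk B.a) (unit_comp_free_str_comp_counit adj B)

theorem map_a_comp_ofMonadAlgebra_str (A : adj.toMonad.Algebra) :
    T.map A.a ≫ (ofMonadAlgebra adj A).str = (Free.obj A.A).str ≫ A.a := by
  have nat : A.a ≫ adj.unit.app A.A = adj.unit.app _ ≫ (Free.map A.a).f :=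
    adj.unit.naturality A.a
  have mult : (Free.map A.a).f ≫ A.a = (adj.counit.app (Free.obj A.A)).f ≫ A.a :=
    A.assoc.symm
  have triangle := unit_comp_free_str_comp_counit adj (Free.obj A.A) =≫ A.a
  dsimp only [ofMonadAlgebra]
  erw [← T.map_comp_assoc, nat, T.map_comp_assoc, (Free.map A.a).h_assoc, mult]
  erw [Category.assoc, Category.assoc] at triangle
  exact triangle

def strHom (A : adj.toMonad.Algebra) : Free.obj A.A ⟶ ofMonadAlgebra adj A :=
  ⟨A.a, map_a_comp_ofMonadAlgebra_str adj A⟩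

theorem counit_app_ofMonadAlgebra (A : adj.toMonad.Algebra) :
    adj.counit.app (ofMonadAlgebra adj A) = strHom adj A := by
  apply (adj.homEquiv _ _).injective
  erw [adj.homEquiv_unit, adj.homEquiv_unit]
  exact (adj.right_triangle_components _).trans A.unit.symm

theorem comparison_obj_ofMonadAlgebra (A : adj.toMonad.Algebra) :
    (Monad.comparison adj).obj (ofMonadAlgebra adj A) = A := by
  have h := congrArg Hom.f (counit_app_ofMonadAlgebra adj A)
  obtain ⟨X, a, _, _⟩ := A
  dsimp only [Monad.comparison]
  congr

theorem map_f_comp_ofMonadAlgebra_str {A A' : adj.toMonad.Algebra} (g : A ⟶ A') :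
    T.map g.f ≫ (ofMonadAlgebra adj A').str = (ofMonadAlgebra adj A).str ≫ g.f := by
  have nat : g.f ≫ adj.unit.app A'.A = adj.unit.app A.A ≫ (Free.map g.f).f :=
    adj.unit.naturality g.f
  dsimp only [ofMonadAlgebra]
  erw [← T.map_comp_assoc, nat, T.map_comp_assoc, (Free.map g.f).h_assoc, g.h]
  exact ((Category.assoc _ _ _).trans (_ ≫= Category.assoc _ _ _)).symm

def ofMonadAlgebraFunctor : adj.toMonad.Algebra ⥤ Algebra T where
  obj := ofMonadAlgebra adj
  map g := ⟨g.f, map_f_comp_ofMonadAlgebra_str adj g⟩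

theorem comparison_comp_ofMonadAlgebraFunctor :
    Monad.comparison adj ⋙ ofMonadAlgebraFunctor adj = 𝟭 (Algebra T) :=
  Functor.ext_of_comp_faithful (forget T) (ofMonadAlgebra_comparison_obj adj) rfl

theorem ofMonadAlgebraFunctor_comp_comparison :
    ofMonadAlgebraFunctor adj ⋙ Monad.comparison adj = 𝟭 adj.toMonad.Algebra :=
  Functor.ext_of_comp_faithful adj.toMonad.forget (comparison_obj_ofMonadAlgebra adj) rfl

end CategoryTheory.Endofunctor.Algebra

theorem free_monad_algebras_iso_general {C : Type u} [Category.{v} C]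
    (T : C ⥤ C) (Free : C ⥤ Endofunctor.Algebra T)
    (adj : Free ⊣ Endofunctor.Algebra.forget T) :
    ∃ (G : Endofunctor.Algebra T ⥤ adj.toMonad.Algebra)
      (H : adj.toMonad.Algebra ⥤ Endofunctor.Algebra T),
      G ⋙ H = 𝟭 _ ∧ H ⋙ G = 𝟭 _ ∧
      G ⋙ adj.toMonad.forget = Endofunctor.Algebra.forget T ∧
      H ⋙ Endofunctor.Algebra.forget T = adj.toMonad.forget ∧
      (∀ B : Endofunctor.Algebra T,
        (G.obj B).A = B.a ∧
        HEq (G.obj B).a ((Endofunctor.Algebra.forget T).map (adj.counit.app B))) ∧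
      (∀ A : adj.toMonad.Algebra,
        (H.obj A).a = A.A ∧
        HEq (H.obj A).str
          (T.map (adj.unit.app A.A) ≫ (Free.obj A.A).str ≫ A.a)) :=
  ⟨Monad.comparison adj, Endofunctor.Algebra.ofMonadAlgebraFunctor adj,
    Endofunctor.Algebra.comparison_comp_ofMonadAlgebraFunctor adj,
    Endofunctor.Algebra.ofMonadAlgebraFunctor_comp_comparison adj, rfl, rfl, fun _ => ⟨rfl, HEq.rfl⟩, fun _ => ⟨rfl, HEq.rfl⟩⟩

/-- let `C` be complete and locally small and `T : C ⥤ C` an endofunctor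
admitting a free monad `m_T` (i.e. the forgetful functor from `T`-functor-algebras has a
left adjoint `Free`, and `m_T = Free ⋙ forget` with the adjunction-induced monad
structure).  Then the category of `T`-functor-algebras is isomorphic to the
Eilenberg–Moore category of `m_T`, via the mutually inverse constructions sending a monad
algebra `(A, a)` to the functor algebra with structure map `T η_A ≫ str ≫ a`, and a
functor algebra `(B, b)` to the monad algebra whose structure map is the image under the
forgetful functor of the adjunction counit. -/
theorem free_monad_algebras_iso {C : Type u} [Category.{v} C] [Limits.HasLimits C]
    (T : C ⥤ C) (Free : C ⥤ Endofunctor.Algebra T)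
    (adj : Free ⊣ Endofunctor.Algebra.forget T) :
    ∃ (G : Endofunctor.Algebra T ⥤ adj.toMonad.Algebra)
      (H : adj.toMonad.Algebra ⥤ Endofunctor.Algebra T),
      G ⋙ H = 𝟭 _ ∧ H ⋙ G = 𝟭 _ ∧
      G ⋙ adj.toMonad.forget = Endofunctor.Algebra.forget T ∧
      H ⋙ Endofunctor.Algebra.forget T = adj.toMonad.forget ∧
      (∀ B : Endofunctor.Algebra T,
        (G.obj B).A = B.a ∧
        HEq (G.obj B).a ((Endofunctor.Algebra.forget T).map (adj.counit.app B))) ∧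
      (∀ A : adj.toMonad.Algebra,
        (H.obj A).a = A.A ∧
        HEq (H.obj A).str
          (T.map (adj.unit.app A.A) ≫ (Free.obj A.A).str ≫ A.a)) :=
  free_monad_algebras_iso_general T Free adj
end

section
/- Let (L, R) be an orthogonal factorization system on C, let T and S be monads on C whose underlying functors preserve L (i.e., send L-maps to L-maps and preserve the factorization), and let α : T ⟹ S be a monad morphism. If α = υ ≫ π is the componentwise (L, R)-factorization through a functor R₀, then R₀ carries a unique monad structure (η^{R₀} = η^T ≫ υ, μ^{R₀} obtained by orthogonality) making υ and π monad morphisms. -/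
open CategoryTheory

universe v u

/-- let `(L, R)` be an orthogonal factorization system on `C`, let `T`, `S`
be monads whose underlying functors preserve the factorization system, and let
`α : T ⟶ S` be a monad morphism.  If `α = υ ≫ π` is a componentwise `(L, R)`-factorization
of `α` through a functor `R₀`, then `R₀` carries a unique monad structure, with
`η^{R₀} = η^T ≫ υ` and `μ^{R₀}` obtained by orthogonality, making `υ` and `π` monad
morphisms. -/
theorem monad_factorization {C : Type u} [Category.{v} C]
    (L R : MorphismProperty C)
    (hL_iso : ∀ {X Y : C} (f : X ⟶ Y), IsIso f → L f)
    (hR_iso : ∀ {X Y : C} (f : X ⟶ Y), IsIso f → R f)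
    (hL_comp : ∀ {X Y Z : C} (f : X ⟶ Y) (g : Y ⟶ Z), L f → L g → L (f ≫ g))
    (hR_comp : ∀ {X Y Z : C} (f : X ⟶ Y) (g : Y ⟶ Z), R f → R g → R (f ≫ g))
    (fac : ∀ {X Y : C} (f : X ⟶ Y),
      ∃ (Z : C) (u : X ⟶ Z) (p : Z ⟶ Y), L u ∧ R p ∧ u ≫ p = f)
    (orth : ∀ {X Y Z W : C} (f : X ⟶ Y) (g : Z ⟶ W), L f → R g →
      ∀ (x : X ⟶ Z) (y : Y ⟶ W), x ≫ g = f ≫ y →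
        ∃! u : Y ⟶ Z, f ≫ u = x ∧ u ≫ g = y)
    (T S : Monad C)
    (hTL : ∀ {X Y : C} (f : X ⟶ Y), L f → L (T.map f))
    (hTR : ∀ {X Y : C} (f : X ⟶ Y), R f → R (T.map f))
    (hSL : ∀ {X Y : C} (f : X ⟶ Y), L f → L (S.map f))
    (hSR : ∀ {X Y : C} (f : X ⟶ Y), R f → R (S.map f))
    (α : T ⟶ S)
    (R₀ : C ⥤ C) (υ : T.toFunctor ⟶ R₀) (π : R₀ ⟶ S.toFunctor)
    (hfac : υ ≫ π = α.toNatTrans)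
    (hυ : ∀ X : C, L (υ.app X)) (hπ : ∀ X : C, R (π.app X)) :
    ∃! str : (𝟭 C ⟶ R₀) × ((R₀ ⋙ R₀) ⟶ R₀),
      -- monad laws for `(R₀, η', μ')`
      (∀ X : C, R₀.map (str.1.app X) ≫ str.2.app X = 𝟙 (R₀.obj X)) ∧
      (∀ X : C, str.1.app (R₀.obj X) ≫ str.2.app X = 𝟙 (R₀.obj X)) ∧
      (∀ X : C, R₀.map (str.2.app X) ≫ str.2.app X = str.2.app (R₀.obj X) ≫ str.2.app X) ∧
      -- `υ` is a monad morphism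
      (∀ X : C, T.η.app X ≫ υ.app X = str.1.app X) ∧
      (∀ X : C, T.μ.app X ≫ υ.app X =
        υ.app (T.obj X) ≫ R₀.map (υ.app X) ≫ str.2.app X) ∧
      -- `π` is a monad morphism
      (∀ X : C, str.1.app X ≫ π.app X = S.η.app X) ∧
      (∀ X : C, str.2.app X ≫ π.app X =
        π.app (R₀.obj X) ≫ S.map (π.app X) ≫ S.μ.app X) := by
  classical
  have hα : ∀ X : C, υ.app X ≫ π.app X = α.toNatTrans.app X := by
    intro X; rw [← hfac]; rfl
  have hαra : ∀ (X : C) {Z : C} (h : S.obj X ⟶ Z),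
      υ.app X ≫ π.app X ≫ h = α.toNatTrans.app X ≫ h := by
    intro X Z h; rw [← Category.assoc, hα X]
  -- uniqueness of diagonal lifts
  have uniq : ∀ {X Y Z W : C} (f : X ⟶ Y) (g : Z ⟶ W), L f → R g →
      ∀ (u v : Y ⟶ Z), f ≫ u = f ≫ v → u ≫ g = v ≫ g → u = v := by
    intro X Y Z W f g hf hg u v h1 h2
    obtain ⟨w, -, hw⟩ := orth f g hf hg (f ≫ u) (u ≫ g) (Category.assoc f u g)
    rw [hw u ⟨rfl, rfl⟩, hw v ⟨h1.symm, h2.symm⟩]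
  -- unit/multiplication naturality in convenient form
  have hTη : ∀ {X Y : C} (f : X ⟶ Y), f ≫ T.η.app Y = T.η.app X ≫ T.map f := by
    intro X Y f; simpa using T.η.naturality f
  have hSη : ∀ {X Y : C} (f : X ⟶ Y), f ≫ S.η.app Y = S.η.app X ≫ S.map f := by
    intro X Y f; simpa using S.η.naturality f
  have hTμ : ∀ {X Y : C} (f : X ⟶ Y),
      T.map (T.map f) ≫ T.μ.app Y = T.μ.app X ≫ T.map f := by
    intro X Y f; simpa using T.μ.naturality f
  have hSμ : ∀ {X Y : C} (f : X ⟶ Y),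
      S.map (S.map f) ≫ S.μ.app Y = S.μ.app X ≫ S.map f := by
    intro X Y f; simpa using S.μ.naturality f
  -- existence of the multiplication, componentwise
  have exmu : ∀ X : C, ∃ u : R₀.obj (R₀.obj X) ⟶ R₀.obj X,
      (T.map (υ.app X) ≫ υ.app (R₀.obj X)) ≫ u = T.μ.app X ≫ υ.app X ∧
      u ≫ π.app X = π.app (R₀.obj X) ≫ S.map (π.app X) ≫ S.μ.app X := by
    intro X
    refine (orth _ _ (hL_comp _ _ (hTL _ (hυ X)) (hυ _)) (hπ X) _ _ ?_).exists
    simp only [Category.assoc]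
    rw [hα X, α.app_μ X, hαra (R₀.obj X),
      ← α.toNatTrans.naturality_assoc (π.app X) (S.μ.app X), ← hα X,
      Functor.map_comp]
    simp only [Category.assoc]
  choose mu hmu1 hmu2 using exmu
  have hmu1r : ∀ X : C, T.map (υ.app X) ≫ υ.app (R₀.obj X) ≫ mu X =
      T.μ.app X ≫ υ.app X := by
    intro X; rw [← hmu1 X, Category.assoc]
  have hmu1ra : ∀ (X : C) {Z : C} (h : R₀.obj X ⟶ Z),
      T.map (υ.app X) ≫ υ.app (R₀.obj X) ≫ mu X ≫ h =
      T.μ.app X ≫ υ.app X ≫ h := by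
    intro X Z h
    simp only [← Category.assoc]
    rw [hmu1 X]
  have hmu2ra : ∀ (X : C) {Z : C} (h : S.obj X ⟶ Z),
      mu X ≫ π.app X ≫ h =
      π.app (R₀.obj X) ≫ S.map (π.app X) ≫ S.μ.app X ≫ h := by
    intro X Z h
    rw [← Category.assoc, hmu2 X]
    simp only [Category.assoc]
  -- alternative form of the first lifting equation
  have hmu1' : ∀ X : C, υ.app (T.obj X) ≫ R₀.map (υ.app X) ≫ mu X =
      T.μ.app X ≫ υ.app X := by
    intro X
    rw [← υ.naturality_assoc (υ.app X) (mu X), hmu1r X]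
  -- naturality of `mu`
  have hmu_nat : ∀ {X Y : C} (f : X ⟶ Y),
      R₀.map (R₀.map f) ≫ mu Y = mu X ≫ R₀.map f := by
    intro X Y f
    refine uniq (T.map (υ.app X) ≫ υ.app (R₀.obj X)) (π.app Y)
      (hL_comp _ _ (hTL _ (hυ X)) (hυ _)) (hπ Y) _ _ ?_ ?_
    · simp only [Category.assoc]
      rw [← υ.naturality_assoc (R₀.map f) (mu Y),
        ← Category.assoc (T.map (υ.app X)), ← Functor.map_comp,
        ← υ.naturality f, Functor.map_comp, Category.assoc, hmu1r Y,
        ← Category.assoc, hTμ f, Category.assoc, υ.naturality f, hmu1ra X]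
    · simp only [Category.assoc]
      rw [hmu2 Y, π.naturality_assoc (R₀.map f),
        ← Category.assoc (S.map (R₀.map f)), ← Functor.map_comp,
        π.naturality f, Functor.map_comp, Category.assoc, hSμ f, hmu2ra X]
  refine ⟨⟨{ app := fun X => T.η.app X ≫ υ.app X,
             naturality := fun X Y f => by
               simp only [Functor.id_map, ← Category.assoc, hTη f]
               simp only [Category.assoc, υ.naturality f] },
           { app := mu, naturality := fun X Y f => hmu_nat f }⟩,
    ⟨?_, ?_, ?_, ?_, ?_, ?_, ?_⟩, ?_⟩
  · -- R₀.map η' ≫ μ' = 𝟙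
    intro X
    show R₀.map (T.η.app X ≫ υ.app X) ≫ mu X = 𝟙 (R₀.obj X)
    refine uniq (υ.app X) (π.app X) (hυ X) (hπ X) _ _ ?_ ?_
    · have h := υ.naturality_assoc (T.η.app X ≫ υ.app X) (mu X)
      simp only [Functor.id_obj] at h ⊢
      rw [← h, Functor.map_comp, Category.assoc, hmu1r X, ← Category.assoc,
        T.right_unit X]
      simp
    · have h := π.naturality (T.η.app X ≫ υ.app X)
      simp only [Functor.id_obj] at h ⊢
      rw [Category.assoc, hmu2 X, ← Category.assoc, h, Category.assoc,
        ← Category.assoc (S.map (T.η.app X ≫ υ.app X)), ← Functor.map_comp,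
        Category.assoc, hα X, α.app_η X, S.right_unit X]
      simp
  · -- η'_{R₀ X} ≫ μ' = 𝟙
    intro X
    show (T.η.app (R₀.obj X) ≫ υ.app (R₀.obj X)) ≫ mu X = 𝟙 (R₀.obj X)
    refine uniq (υ.app X) (π.app X) (hυ X) (hπ X) _ _ ?_ ?_
    · simp only [Category.assoc]
      rw [← Category.assoc (υ.app X), hTη (υ.app X), Category.assoc, hmu1r X,
        ← Category.assoc, T.left_unit X]
      simp
    · simp only [Category.assoc]
      rw [hmu2 X, ← Category.assoc (υ.app (R₀.obj X)), hα (R₀.obj X),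
        ← Category.assoc, α.app_η (R₀.obj X),
        ← Category.assoc (S.η.app (R₀.obj X)), ← hSη (π.app X),
        Category.assoc, S.left_unit X]
      simp
  · -- associativity
    intro X
    show R₀.map (mu X) ≫ mu X = mu (R₀.obj X) ≫ mu X
    refine uniq (T.map (T.map (υ.app X)) ≫ T.map (υ.app (R₀.obj X)) ≫
        υ.app (R₀.obj (R₀.obj X))) (π.app X)
      (hL_comp _ _ (hTL _ (hTL _ (hυ X)))
        (hL_comp _ _ (hTL _ (hυ _)) (hυ _))) (hπ X) _ _ ?_ ?_
    · simp only [Category.assoc]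
      rw [← υ.naturality_assoc (mu X) (mu X),
        ← Category.assoc (T.map (υ.app (R₀.obj X))), ← Functor.map_comp,
        ← Category.assoc (T.map (T.map (υ.app X))), ← Functor.map_comp,
        hmu1r X, Functor.map_comp, Category.assoc, hmu1r X,
        ← Category.assoc (T.map (T.μ.app X)), T.assoc X, Category.assoc,
        hmu1ra (R₀.obj X), ← Category.assoc (T.map (T.map (υ.app X))),
        hTμ (υ.app X), Category.assoc, hmu1r X]
    · simp only [Category.assoc]
      rw [hmu2 X, π.naturality_assoc (mu X), ← Category.assoc (S.map (mu X)),
        ← Functor.map_comp, hmu2 X]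
      simp only [Functor.map_comp, Category.assoc]
      rw [S.assoc X, ← Category.assoc (S.map (S.map (π.app X))),
        hSμ (π.app X), Category.assoc, hmu2ra (R₀.obj X)]
  · intro X; rfl
  · intro X; exact (hmu1' X).symm
  · intro X
    show (T.η.app X ≫ υ.app X) ≫ π.app X = S.η.app X
    rw [Category.assoc, hα, α.app_η X]
  · exact hmu2
  · -- uniqueness
    rintro ⟨η', μ'⟩ ⟨-, -, -, h4, h5, h6, h7⟩
    dsimp only at h4 h5 h6 h7
    have hη : ∀ X : C, η'.app X = T.η.app X ≫ υ.app X := fun X => (h4 X).symm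
    have hμ : ∀ X : C, μ'.app X = mu X := by
      intro X
      refine uniq (T.map (υ.app X) ≫ υ.app (R₀.obj X)) (π.app X)
        (hL_comp _ _ (hTL _ (hυ X)) (hυ _)) (hπ X) _ _ ?_ ?_
      · rw [Category.assoc, υ.naturality_assoc (υ.app X) (μ'.app X),
          ← h5 X, hmu1 X]
      · show μ'.app X ≫ π.app X = mu X ≫ π.app X
        rw [h7 X, hmu2 X]
    refine Prod.ext ?_ ?_
    · ext X; exact hη X
    · ext X; exact hμ X
end
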